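/- arXiv:1104.2729 — 3 statements merged into one kernel-verified Lean document; each statement's English description precedes it below -/
import Mathlib

section
/- Under Assumption (W) the posterior measure is locally Lipschitz in the data with respect to the Hellinger metric: for every r > 0 there exists a constant c(r) > 0 such that for all y, y' ∈ ℝ^m with |y| ≤ r and |y'| ≤ r one has d_Hell(μ^y, μ^{y'}) ≤ c(r)·|y − y'|. -/
/-!
Under (W) the normalising constant `Z(y)` lies between `ε = exp(-M(r)) μ0(X(r)) > 0` and `1` on
the ball of radius `r`, and, because `t ↦ exp(-t)` is 1-Lipschitz on `[0, ∞)`, it is Lipschitz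
there with constant `∫ G(r) dμ0`. Writing the square root of the density as
`√(Z(y)⁻¹) · exp(-Φ(x;y)/2)` and splitting the difference into the change of the exponential
factor and the change of `√(Z⁻¹)` bounds the Hellinger integrand pointwise by
`(ε⁻¹ G(r,x)² / 2 + ε⁻⁴ (∫ G(r) dμ0)² / 2) |y - y'|²`, which is integrable since `G(r) ∈ L²`.
-/

open MeasureTheory Real

lemma abs_exp_neg_sub_exp_neg_le {a b : ℝ} (ha : 0 ≤ a) (hb : 0 ≤ b) :
    |exp (-a) - exp (-b)| ≤ |a - b| := by
  wlog hab : a ≤ b generalizing a b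
  · rw [abs_sub_comm, abs_sub_comm a]
    exact this hb ha (le_of_not_ge hab)
  have hexp : exp (-a) - exp (-b) = exp (-a) * (1 - exp (-(b - a))) := by
    rw [mul_sub, mul_one, ← exp_add]; ring_nf
  have h1 : 0 ≤ 1 - exp (-(b - a)) := sub_nonneg.2 (exp_le_one_iff.2 (by linarith))
  have h2 : 1 - exp (-(b - a)) ≤ b - a := by linarith [one_sub_le_exp_neg (b - a)]
  have h3 : exp (-a) ≤ 1 := exp_le_one_iff.2 (by linarith)
  rw [hexp, abs_of_nonneg (mul_nonneg (exp_nonneg _) h1), abs_sub_comm, abs_of_nonneg (by linarith)]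
  nlinarith [exp_nonneg (-a)]

lemma abs_sqrt_sub_sqrt_le_of_one_le {a b : ℝ} (ha : 1 ≤ a) (hb : 1 ≤ b) :
    |√a - √b| ≤ |a - b| / 2 := by
  have hsum : 2 ≤ √a + √b := by
    linarith [one_le_sqrt.2 ha, one_le_sqrt.2 hb]
  have hdiff : a - b = (√a - √b) * (√a + √b) := by
    rw [show (√a - √b) * (√a + √b) = √a ^ 2 - √b ^ 2 by ring, sq_sqrt (by linarith),
      sq_sqrt (by linarith)]
  rw [hdiff, abs_mul, abs_of_pos (by linarith : 0 < √a + √b)]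
  nlinarith [abs_nonneg (√a - √b)]

lemma abs_inv_sub_inv_le {ε a b : ℝ} (hε : 0 < ε) (ha : ε ≤ a) (hb : ε ≤ b) :
    |a⁻¹ - b⁻¹| ≤ ε⁻¹ ^ 2 * |a - b| := by
  have ha0 : 0 < a := hε.trans_le ha
  have hb0 : 0 < b := hε.trans_le hb
  rw [inv_sub_inv ha0.ne' hb0.ne', abs_div, abs_sub_comm, abs_of_pos (mul_pos ha0 hb0),
    div_eq_mul_inv, mul_comm, inv_pow, sq]
  gcongr

lemma sq_sqrt_inv_mul_exp_neg_sub_le {ε z z' a b u v : ℝ} (hε : 0 < ε) (hz : ε ≤ z)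
    (hz' : ε ≤ z') (hz1 : z ≤ 1) (hz1' : z' ≤ 1) (ha : 0 ≤ a) (hb : 0 ≤ b)
    (hab : |a - b| ≤ u) (hzz' : |z - z'| ≤ v) :
    (√(z⁻¹ * exp (-a)) - √(z'⁻¹ * exp (-b))) ^ 2 ≤ ε⁻¹ / 2 * u ^ 2 + ε⁻¹ ^ 4 / 2 * v ^ 2 := by
  have hz0 : 0 < z := hε.trans_le hz
  have hz0' : 0 < z' := hε.trans_le hz'
  rw [sqrt_mul (inv_nonneg.2 hz0.le), sqrt_mul (inv_nonneg.2 hz0'.le), ← exp_half, ← exp_half]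
  set s := √z⁻¹
  set s' := √z'⁻¹
  set p := exp (-a / 2)
  set q := exp (-b / 2)
  have hpq : |p - q| ≤ u / 2 := by
    have h := abs_exp_neg_sub_exp_neg_le (by positivity : 0 ≤ a / 2) (by positivity : 0 ≤ b / 2)
    rw [← neg_div, ← neg_div, ← sub_div, abs_div, abs_two] at h
    linarith
  have hss' : |s - s'| ≤ ε⁻¹ ^ 2 * v / 2 := by
    refine (abs_sqrt_sub_sqrt_le_of_one_le (one_le_inv₀ hz0 |>.2 hz1)
      (one_le_inv₀ hz0' |>.2 hz1')).trans ?_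
    gcongr
    exact (abs_inv_sub_inv_le hε hz hz').trans (by gcongr)
  have hs : s ^ 2 ≤ ε⁻¹ := by
    rw [sq_sqrt (inv_nonneg.2 hz0.le)]
    exact inv_anti₀ hε hz
  have hq : q ^ 2 ≤ 1 := pow_le_one₀ (exp_nonneg _) (exp_le_one_iff.2 (by linarith))
  calc (s * p - s' * q) ^ 2 = (s * (p - q) + (s - s') * q) ^ 2 := by ring
    _ ≤ 2 * (s ^ 2 * |p - q| ^ 2 + |s - s'| ^ 2 * q ^ 2) := by
      rw [sq_abs, sq_abs, ← mul_pow, ← mul_pow]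
      exact add_sq_le
    _ ≤ 2 * (ε⁻¹ * (u / 2) ^ 2 + (ε⁻¹ ^ 2 * v / 2) ^ 2 * 1) := by gcongr
    _ = ε⁻¹ / 2 * u ^ 2 + ε⁻¹ ^ 4 / 2 * v ^ 2 := by ring

section

variable {X : Type*} [MeasurableSpace X] {μ : Measure X} {f g : X → ℝ}

lemma integrable_exp_neg_of_nonneg [IsFiniteMeasure μ] (hf : Measurable f)
    (hf0 : ∀ x, 0 ≤ f x) : Integrable (fun x => exp (-f x)) μ := by
  refine (integrable_const 1).mono' hf.neg.exp.aestronglyMeasurable (ae_of_all _ fun x => ?_)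
  rw [norm_of_nonneg (exp_nonneg _)]
  exact exp_le_one_iff.2 (neg_nonpos.2 (hf0 x))

lemma integral_exp_neg_le_one [IsProbabilityMeasure μ] (hf0 : ∀ x, 0 ≤ f x) :
    ∫ x, exp (-f x) ∂μ ≤ 1 := by
  calc ∫ x, exp (-f x) ∂μ ≤ ∫ _, (1 : ℝ) ∂μ :=
        integral_mono_of_nonneg (ae_of_all _ fun _ => exp_nonneg _) (integrable_const 1)
          (ae_of_all _ fun x => exp_le_one_iff.2 (neg_nonpos.2 (hf0 x)))
    _ = 1 := by simp

lemma exp_neg_mul_measureReal_le_integral_exp_neg [IsFiniteMeasure μ] {s : Set X} {M : ℝ}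
    (hs : MeasurableSet s) (hf : Integrable (fun x => exp (-f x)) μ) (hM : ∀ x ∈ s, f x ≤ M) :
    exp (-M) * μ.real s ≤ ∫ x, exp (-f x) ∂μ :=
  calc exp (-M) * μ.real s ≤ ∫ x in s, exp (-f x) ∂μ :=
        setIntegral_ge_of_const_le_real hs (measure_ne_top μ s)
          (fun x hx => exp_le_exp.2 (neg_le_neg (hM x hx))) hf.integrableOn
    _ ≤ ∫ x, exp (-f x) ∂μ := setIntegral_le_integral hf (ae_of_all _ fun _ => exp_nonneg _)

lemma abs_integral_exp_neg_sub_le {G : X → ℝ} (hf : Integrable (fun x => exp (-f x)) μ)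
    (hg : Integrable (fun x => exp (-g x)) μ) (hf0 : ∀ x, 0 ≤ f x) (hg0 : ∀ x, 0 ≤ g x)
    (hG : Integrable G μ) (hfg : ∀ x, |f x - g x| ≤ G x) :
    |∫ x, exp (-f x) ∂μ - ∫ x, exp (-g x) ∂μ| ≤ ∫ x, G x ∂μ := by
  rw [← integral_sub hf hg]
  exact abs_integral_le_integral_abs.trans <| integral_mono (hf.sub hg).abs hG fun x =>
    (abs_exp_neg_sub_exp_neg_le (hf0 x) (hg0 x)).trans (hfg x)

lemma sqrt_half_integral_le_of_le_mul_sq {F B : X → ℝ} {t : ℝ} (ht : 0 ≤ t)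
    (hF0 : ∀ x, 0 ≤ F x) (hB : Integrable B μ) (hFB : ∀ x, F x ≤ B x * t ^ 2) :
    √(1 / 2 * ∫ x, F x ∂μ) ≤ √((∫ x, B x ∂μ) / 2) * t := by
  have hint : ∫ x, F x ∂μ ≤ (∫ x, B x ∂μ) * t ^ 2 := by
    rw [← integral_mul_const]
    exact integral_mono_of_nonneg (ae_of_all _ hF0) (hB.mul_const _) (ae_of_all _ hFB)
  calc √(1 / 2 * ∫ x, F x ∂μ) ≤ √((∫ x, B x ∂μ) / 2 * t ^ 2) := sqrt_le_sqrt (by linarith)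
    _ = √((∫ x, B x ∂μ) / 2) * t := by rw [sqrt_mul' _ (sq_nonneg t), sqrt_sq ht]

end

theorem posterior_locally_lipschitz_hellinger_general
    {X : Type*} [MeasurableSpace X] (μ0 : Measure X) [IsProbabilityMeasure μ0]
    (m : ℕ)
    (Φ : X → EuclideanSpace ℝ (Fin m) → ℝ)
    (hΦmeas : ∀ y : EuclideanSpace ℝ (Fin m), Measurable (fun x => Φ x y))
    (hΦnonneg : ∀ x y, 0 ≤ Φ x y)
    -- Assumption (W)(i)
    (hi : ∀ r : ℝ, 0 < r → ∃ (M : ℝ) (Xr : Set X), 0 < M ∧ MeasurableSet Xr ∧ 0 < μ0 Xr ∧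
      ∀ x ∈ Xr, ∀ y : EuclideanSpace ℝ (Fin m), ‖y‖ ≤ r → Φ x y ≤ M)
    -- Assumption (W)(ii)
    (G : ℝ → X → ℝ)
    (hGL2 : ∀ r : ℝ, 0 < r → MemLp (G r) 2 μ0)
    (hii : ∀ r : ℝ, 0 < r → ∀ (x : X) (y y' : EuclideanSpace ℝ (Fin m)),
      ‖y‖ ≤ r → ‖y'‖ ≤ r → |Φ x y - Φ x y'| ≤ G r x * ‖y - y'‖)
    -- the normalization constant
    (Z : EuclideanSpace ℝ (Fin m) → ℝ)
    (hZ : ∀ y, Z y = ∫ x, Real.exp (-Φ x y) ∂μ0)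
    -- the Hellinger distance between the posterior measures `μ^y` and `μ^{y'}`
    (dHell : EuclideanSpace ℝ (Fin m) → EuclideanSpace ℝ (Fin m) → ℝ)
    (hdHell : ∀ y y', dHell y y' = Real.sqrt ((1/2) * ∫ x,
      (Real.sqrt ((Z y)⁻¹ * Real.exp (-Φ x y))
        - Real.sqrt ((Z y')⁻¹ * Real.exp (-Φ x y')))^2 ∂μ0)) :
    ∀ r : ℝ, 0 < r → ∃ c : ℝ, 0 < c ∧
      ∀ y y' : EuclideanSpace ℝ (Fin m), ‖y‖ ≤ r → ‖y'‖ ≤ r →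
        dHell y y' ≤ c * ‖y - y'‖ := by
  intro r hr
  obtain ⟨M, S, -, hS, hSpos, hΦM⟩ := hi r hr
  have hint (y) : Integrable (fun x => exp (-Φ x y)) μ0 :=
    integrable_exp_neg_of_nonneg (hΦmeas y) (hΦnonneg · y)
  set ε := exp (-M) * μ0.real S
  have hε : 0 < ε := mul_pos (exp_pos _) (ENNReal.toReal_pos hSpos.ne' (measure_ne_top μ0 S))
  have hZ_ge (y) (hy : ‖y‖ ≤ r) : ε ≤ Z y :=
    hZ y ▸ exp_neg_mul_measureReal_le_integral_exp_neg hS (hint y) fun x hx => hΦM x hx y hy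
  have hZ_le (y) : Z y ≤ 1 := hZ y ▸ integral_exp_neg_le_one (hΦnonneg · y)
  have hG : Integrable (G r) μ0 := (hGL2 r hr).integrable one_le_two
  set I := ∫ x, G r x ∂μ0
  have hZ_lip (y y') (hy : ‖y‖ ≤ r) (hy' : ‖y'‖ ≤ r) : |Z y - Z y'| ≤ I * ‖y - y'‖ := by
    rw [hZ, hZ, ← integral_mul_const]
    exact abs_integral_exp_neg_sub_le (hint y) (hint y') (hΦnonneg · y) (hΦnonneg · y')
      (hG.mul_const _) fun x => hii r hr x y y' hy hy'
  set B : X → ℝ := fun x => ε⁻¹ / 2 * G r x ^ 2 + ε⁻¹ ^ 4 / 2 * I ^ 2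
  have hB : Integrable B μ0 := ((hGL2 r hr).integrable_sq.const_mul _).add (integrable_const _)
  refine ⟨√((∫ x, B x ∂μ0) / 2) + 1, by positivity, fun y y' hy hy' => ?_⟩
  rw [hdHell]
  refine (sqrt_half_integral_le_of_le_mul_sq (norm_nonneg _) (fun _ => sq_nonneg _) hB
    fun x => ?_).trans (by gcongr; exact le_add_of_nonneg_right zero_le_one)
  calc _ ≤ ε⁻¹ / 2 * (G r x * ‖y - y'‖) ^ 2 + ε⁻¹ ^ 4 / 2 * (I * ‖y - y'‖) ^ 2 :=
        sq_sqrt_inv_mul_exp_neg_sub_le hε (hZ_ge y hy) (hZ_ge y' hy') (hZ_le y) (hZ_le y')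
          (hΦnonneg x y) (hΦnonneg x y') (hii r hr x y y' hy hy') (hZ_lip y y' hy hy')
    _ = B x * ‖y - y'‖ ^ 2 := by ring

/-- Under Assumption (W), the posterior measure `μ^y`, with density
`Z(y)⁻¹ exp(-Φ(·;y))` with respect to the prior `μ0`, is locally Lipschitz in the data `y`
with respect to the Hellinger metric: for every `r > 0` there is `c(r) > 0` such that
`d_Hell(μ^y, μ^{y'}) ≤ c(r) * |y - y'|` whenever `|y| ≤ r` and `|y'| ≤ r`. -/
theorem posterior_locally_lipschitz_hellinger
    {X : Type*} [MeasurableSpace X] (μ0 : Measure X) [IsProbabilityMeasure μ0]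
    (m : ℕ) (hm : 1 ≤ m)
    (Φ : X → EuclideanSpace ℝ (Fin m) → ℝ)
    (hΦmeas : ∀ y : EuclideanSpace ℝ (Fin m), Measurable (fun x => Φ x y))
    (hΦnonneg : ∀ x y, 0 ≤ Φ x y)
    -- Assumption (W)(i)
    (hi : ∀ r : ℝ, 0 < r → ∃ (M : ℝ) (Xr : Set X), 0 < M ∧ MeasurableSet Xr ∧ 0 < μ0 Xr ∧
      ∀ x ∈ Xr, ∀ y : EuclideanSpace ℝ (Fin m), ‖y‖ ≤ r → Φ x y ≤ M)
    -- Assumption (W)(ii)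
    (G : ℝ → X → ℝ)
    (hGL2 : ∀ r : ℝ, 0 < r → MemLp (G r) 2 μ0)
    (hii : ∀ r : ℝ, 0 < r → ∀ (x : X) (y y' : EuclideanSpace ℝ (Fin m)),
      ‖y‖ ≤ r → ‖y'‖ ≤ r → |Φ x y - Φ x y'| ≤ G r x * ‖y - y'‖)
    -- the normalization constant
    (Z : EuclideanSpace ℝ (Fin m) → ℝ)
    (hZ : ∀ y, Z y = ∫ x, Real.exp (-Φ x y) ∂μ0)
    -- the Hellinger distance between the posterior measures `μ^y` and `μ^{y'}`
    (dHell : EuclideanSpace ℝ (Fin m) → EuclideanSpace ℝ (Fin m) → ℝ)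
    (hdHell : ∀ y y', dHell y y' = Real.sqrt ((1/2) * ∫ x,
      (Real.sqrt ((Z y)⁻¹ * Real.exp (-Φ x y))
        - Real.sqrt ((Z y')⁻¹ * Real.exp (-Φ x y')))^2 ∂μ0)) :
    ∀ r : ℝ, 0 < r → ∃ c : ℝ, 0 < c ∧
      ∀ y y' : EuclideanSpace ℝ (Fin m), ‖y‖ ≤ r → ‖y'‖ ≤ r →
        dHell y y' ≤ c * ‖y - y'‖ :=
  posterior_locally_lipschitz_hellinger_general μ0 m Φ hΦmeas hΦnonneg hi G hGL2 hii Z hZ dHell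
    hdHell
end

section
/- For (law of y)-almost every y₀ ∈ ℝ^m, the regular conditional distribution μ^{y₀} of x given y = y₀ is absolutely continuous with respect to μ0, with Radon–Nikodym derivative dμ^{y₀}/dμ0 (x) = Z(y₀)^{-1} exp(−Φ(x; y₀)), where Z(y₀) = ∫_X exp(−Φ(x; y₀)) dμ0(x). -/
/-!
Independence and translation invariance of Lebesgue measure show that the joint law of `(y, x)`
is `volume ⊗ μ0` with density `ℓ (z, a) = ρ (z - 𝒢 a)`, `ρ` the Gaussian density; here
`ℓ (z, a) = c · exp (-Φ (a; z))`. Any joint law `(ν.prod μ).withDensity ℓ` disintegrates as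
`ν.withDensity N ⊗ₘ κ` with `N z = ∫⁻ ℓ (z, ·) dμ` and `κ z = μ.withDensity (ℓ (z, ·) / N z)`,
so by a.e. uniqueness of disintegrations `condDistrib x y` is `κ`. In the Gaussian case
`N = c · Z`, and `c` cancels.
-/

open MeasureTheory ProbabilityTheory Real RealInnerProductSpace
open scoped ENNReal

namespace MeasureTheory.Measure

theorem map_add_prod_withDensity {X E : Type*} [MeasurableSpace X] [MeasurableSpace E]
    [AddCommGroup E] [MeasurableAdd₂ E] [MeasurableSub₂ E]
    (μ : Measure X) [SFinite μ] (ν : Measure E) [SFinite ν] [ν.IsAddLeftInvariant]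
    {ρ : E → ℝ≥0∞} (hρ : Measurable ρ) {f : X → E} (hf : Measurable f) :
    (μ.prod (ν.withDensity ρ)).map (fun p => (f p.1 + p.2, p.1))
      = (ν.prod μ).withDensity (fun q => ρ (q.1 - f q.2)) := by
  have hshift : Measurable fun p : X × E => (f p.1 + p.2, p.1) := by fun_prop
  have hdens : Measurable fun q : E × X => ρ (q.1 - f q.2) := by fun_prop
  refine Measure.ext_of_lintegral _ fun φ hφ => ?_
  calc ∫⁻ q, φ q ∂(μ.prod (ν.withDensity ρ)).map (fun p => (f p.1 + p.2, p.1))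
      = ∫⁻ a, ∫⁻ u, ρ u * φ (f a + u, a) ∂ν ∂μ := by
        rw [lintegral_map hφ hshift, lintegral_prod _ (by fun_prop)]
        refine lintegral_congr fun a => ?_
        exact lintegral_withDensity_eq_lintegral_mul _ hρ (by fun_prop)
    _ = ∫⁻ a, ∫⁻ z, ρ (z - f a) * φ (z, a) ∂ν ∂μ := by
        refine lintegral_congr fun a => ?_
        rw [← lintegral_add_left_eq_self (fun z => ρ (z - f a) * φ (z, a)) (f a)]
        simp only [add_sub_cancel_left]
    _ = ∫⁻ q, φ q ∂(ν.prod μ).withDensity (fun q => ρ (q.1 - f q.2)) := by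
        rw [lintegral_lintegral_swap (by fun_prop),
          lintegral_withDensity_eq_lintegral_mul _ hdens hφ, lintegral_prod _ (by fun_prop)]
        rfl

end MeasureTheory.Measure

namespace ProbabilityTheory

variable {X E : Type*} [MeasurableSpace X] [MeasurableSpace E]

theorem IndepFun.map_add_prod_eq_withDensity {Ω : Type*} [MeasurableSpace Ω]
    [AddCommGroup E] [MeasurableAdd₂ E] [MeasurableSub₂ E]
    {P : Measure Ω} [IsFiniteMeasure P] {x : Ω → X} {σ : Ω → E} (hx : Measurable x)
    (hσ : Measurable σ) (hindep : IndepFun x σ P) {ν : Measure E} [SFinite ν]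
    [ν.IsAddLeftInvariant] {ρ : E → ℝ≥0∞} (hρ : Measurable ρ) (hσlaw : P.map σ = ν.withDensity ρ)
    {f : X → E} (hf : Measurable f) :
    P.map (fun ω => (f (x ω) + σ ω, x ω))
      = (ν.prod (P.map x)).withDensity fun q => ρ (q.1 - f q.2) := by
  have hshift : Measurable fun p : X × E => (f p.1 + p.2, p.1) := by fun_prop
  refine (Measure.map_map hshift (hx.prodMk hσ)).symm.trans ?_
  rw [hindep.map_prod_eq_prod_map_map hx.aemeasurable hσ.aemeasurable, hσlaw,
    Measure.map_add_prod_withDensity _ _ hρ hf]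

noncomputable def bayesPosterior (μ : Measure X) [SFinite μ] (ℓ : E × X → ℝ≥0∞) : Kernel E X :=
  (Kernel.const E μ).withDensity fun z a => ℓ (z, a) / ∫⁻ a', ℓ (z, a') ∂μ

variable {μ : Measure X} [SFinite μ] {ℓ : E × X → ℝ≥0∞}

lemma measurable_bayesPosterior_density (hℓ : Measurable ℓ) :
    Measurable (Function.uncurry fun z a => ℓ (z, a) / ∫⁻ a', ℓ (z, a') ∂μ) :=
  hℓ.div (hℓ.lintegral_prod_right'.comp measurable_fst)

lemma bayesPosterior_apply (hℓ : Measurable ℓ) (z : E) :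
    bayesPosterior μ ℓ z = μ.withDensity fun a => ℓ (z, a) / ∫⁻ a', ℓ (z, a') ∂μ := by
  rw [bayesPosterior, Kernel.withDensity_apply _ (measurable_bayesPosterior_density hℓ),
    Kernel.const_apply]

lemma isMarkovKernel_bayesPosterior (hℓ : Measurable ℓ) (hℓ0 : ∀ z, ∫⁻ a, ℓ (z, a) ∂μ ≠ 0)
    (hℓtop : ∀ z, ∫⁻ a, ℓ (z, a) ∂μ ≠ ∞) : IsMarkovKernel (bayesPosterior μ ℓ) where
  isProbabilityMeasure z := by
    constructor
    simp_rw [bayesPosterior_apply hℓ, withDensity_apply _ MeasurableSet.univ, Measure.restrict_univ,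
      div_eq_mul_inv]
    rw [lintegral_mul_const' _ _ (ENNReal.inv_ne_top.2 (hℓ0 z)),
      ENNReal.mul_inv_cancel (hℓ0 z) (hℓtop z)]

lemma withDensity_compProd_bayesPosterior {ν : Measure E} [SFinite ν] (hℓ : Measurable ℓ)
    (hℓ0 : ∀ z, ∫⁻ a, ℓ (z, a) ∂μ ≠ 0) (hℓtop : ∀ z, ∫⁻ a, ℓ (z, a) ∂μ ≠ ∞) :
    ν.withDensity (fun z => ∫⁻ a, ℓ (z, a) ∂μ) ⊗ₘ bayesPosterior μ ℓ
      = (ν.prod μ).withDensity ℓ := by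
  have := isMarkovKernel_bayesPosterior hℓ hℓ0 hℓtop
  have hdens : Measurable fun p : E × X => ℓ (p.1, p.2) / ∫⁻ a', ℓ (p.1, a') ∂μ :=
    measurable_bayesPosterior_density hℓ
  rw [bayesPosterior] at this ⊢
  rw [Measure.compProd_withDensity hdens, Measure.compProd_const,
    prod_withDensity_left hℓ.lintegral_prod_right',
    ← withDensity_mul _ (by fun_prop : Measurable fun q : E × X => ∫⁻ a, ℓ (q.1, a) ∂μ) hdens]
  congr with q
  exact ENNReal.mul_div_cancel (hℓ0 q.1) (hℓtop q.1)

theorem condDistrib_ae_eq_bayesPosterior [StandardBorelSpace X] [Nonempty X]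
    {Ω : Type*} [MeasurableSpace Ω] {P : Measure Ω} [IsFiniteMeasure P] {x : Ω → X} {y : Ω → E}
    (hx : Measurable x) (hy : Measurable y) {ν : Measure E} [SFinite ν] (hℓ : Measurable ℓ)
    (hℓ0 : ∀ z, ∫⁻ a, ℓ (z, a) ∂μ ≠ 0) (hℓtop : ∀ z, ∫⁻ a, ℓ (z, a) ∂μ ≠ ∞)
    (hjoint : P.map (fun ω => (y ω, x ω)) = (ν.prod μ).withDensity ℓ) :
    condDistrib x y P =ᵐ[P.map y] bayesPosterior μ ℓ := by
  have := isMarkovKernel_bayesPosterior hℓ hℓ0 hℓtop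
  have hjoint' := hjoint.trans (withDensity_compProd_bayesPosterior hℓ hℓ0 hℓtop).symm
  have hy_law : P.map y = ν.withDensity (fun z => ∫⁻ a, ℓ (z, a) ∂μ) := by
    rw [← Measure.fst_map_prodMk hx, hjoint', Measure.fst_compProd]
  refine condDistrib_ae_eq_of_measure_eq_compProd_of_measurable hy hx ?_
  rw [hjoint', hy_law]

end ProbabilityTheory

lemma pos_of_withDensity_ofReal_const_mul_ne_zero {E : Type*} [MeasurableSpace E] {ν : Measure E}
    {c : ℝ} {g : E → ℝ} (hg : ∀ u, 0 ≤ g u)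
    (hν : ν.withDensity (fun u => ENNReal.ofReal (c * g u)) ≠ 0) : 0 < c := by
  contrapose! hν
  simp_rw [ENNReal.ofReal_eq_zero.2 (mul_nonpos_of_nonpos_of_nonneg hν (hg _))]
  exact withDensity_zero

theorem bayes_formula_condDistrib_general
    {X : Type*} [MeasurableSpace X] [TopologicalSpace X] [PolishSpace X] [BorelSpace X]
    [Nonempty X]
    (μ0 : Measure X) [IsProbabilityMeasure μ0]
    {Ω : Type*} [MeasurableSpace Ω] (P : Measure Ω) [IsProbabilityMeasure P]
    (m : ℕ)
    (𝒢 : X → EuclideanSpace ℝ (Fin m)) (h𝒢 : Continuous 𝒢)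
    (S Q : EuclideanSpace ℝ (Fin m) →L[ℝ] EuclideanSpace ℝ (Fin m))
    -- the random element `x` with law `μ0`
    (x : Ω → X) (hx : Measurable x) (hxlaw : P.map x = μ0)
    -- the Gaussian noise `σ ~ N(0, Σ)`, independent of `x`
    (σ : Ω → EuclideanSpace ℝ (Fin m)) (hσ : Measurable σ)
    (hσlaw : P.map σ = volume.withDensity (fun u => ENNReal.ofReal
      (((2 * π) ^ m * LinearMap.det
          (S : EuclideanSpace ℝ (Fin m) →ₗ[ℝ] EuclideanSpace ℝ (Fin m))) ^ (-(1:ℝ)/2)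
        * Real.exp (-(1/2) * ‖Q u‖^2))))
    (hindep : IndepFun x σ P)
    -- the observation
    (y : Ω → EuclideanSpace ℝ (Fin m)) (hy : y = fun ω => 𝒢 (x ω) + σ ω)
    -- the misfit functional and the normalization constant
    (Φ : X → EuclideanSpace ℝ (Fin m) → ℝ)
    (hΦ : ∀ a z, Φ a z = (1/2) * ‖Q (z - 𝒢 a)‖^2)
    (Z : EuclideanSpace ℝ (Fin m) → ℝ)
    (hZ : ∀ z, Z z = ∫ a, Real.exp (-Φ a z) ∂μ0) :
    ∀ᵐ y₀ ∂(P.map y),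
      condDistrib x y P y₀ ≪ μ0 ∧
      condDistrib x y P y₀
        = μ0.withDensity (fun a => ENNReal.ofReal ((Z y₀)⁻¹ * Real.exp (-Φ a y₀))) := by
  subst hy
  set c : ℝ := ((2 * π) ^ m * LinearMap.det
      (S : EuclideanSpace ℝ (Fin m) →ₗ[ℝ] EuclideanSpace ℝ (Fin m))) ^ (-(1:ℝ)/2)
  have := Measure.isProbabilityMeasure_map (μ := P) hσ.aemeasurable
  have hc : 0 < c := pos_of_withDensity_ofReal_const_mul_ne_zero (fun _ => (exp_pos _).le)
    (hσlaw ▸ IsProbabilityMeasure.ne_zero (P.map σ))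
  have hΦ_cont : Continuous (Function.uncurry Φ) := by
    simp_rw [Function.uncurry_def, hΦ]; fun_prop
  have hℓ : Measurable fun q : EuclideanSpace ℝ (Fin m) × X =>
      ENNReal.ofReal (c * exp (-Φ q.2 q.1)) := by
    fun_prop
  have hint z : Integrable (fun a => exp (-Φ a z)) μ0 := by
    refine Integrable.of_bound (by fun_prop) 1 (ae_of_all _ fun a => ?_)
    simp [hΦ]
  have hZ_pos z : 0 < Z z := hZ z ▸ integral_exp_pos (hint z)
  have hN z : ∫⁻ a, ENNReal.ofReal (c * exp (-Φ a z)) ∂μ0 = ENNReal.ofReal (c * Z z) := by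
    rw [hZ z, ← integral_const_mul, ofReal_integral_eq_lintegral_ofReal ((hint z).const_mul c)
      (ae_of_all _ fun a => (mul_pos hc (exp_pos _)).le)]
  have hjoint : P.map (fun ω => (𝒢 (x ω) + σ ω, x ω))
      = (volume.prod μ0).withDensity fun q => ENNReal.ofReal (c * exp (-Φ q.2 q.1)) := by
    rw [hindep.map_add_prod_eq_withDensity hx hσ (by fun_prop) hσlaw h𝒢.measurable, hxlaw]
    simp only [hΦ, neg_mul]
  filter_upwards [condDistrib_ae_eq_bayesPosterior hx (by fun_prop) hℓ
    (fun z => by simp [hN, hc, hZ_pos]) (fun z => by simp [hN]) hjoint] with z hz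
  rw [hz, bayesPosterior_apply hℓ, hN z]
  refine ⟨withDensity_absolutelyContinuous _ _, ?_⟩
  congr with a
  rw [← ENNReal.ofReal_div_of_pos (mul_pos hc (hZ_pos z)), mul_div_mul_left _ _ hc.ne',
    div_eq_inv_mul]

/-- Let `X` be Polish with Borel probability measure `μ0`, `𝒢 : X → ℝ^m`
continuous, `Σ` symmetric positive definite with inverse square root `Q = Σ^{-1/2}`, and on a
probability space let `x` have law `μ0` and `σ ~ N(0, Σ)` (law with Lebesgue density
`((2π)^m det Σ)^{-1/2} exp(-(1/2)|Σ^{-1/2} u|²)`) be independent of `x`; set `y = 𝒢(x) + σ`.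
Then for `law(y)`-a.e. `y₀`, the regular conditional distribution of `x` given `y = y₀` is
absolutely continuous with respect to `μ0`, with Radon–Nikodym density
`Z(y₀)⁻¹ exp(-Φ(·; y₀))` where `Φ(a; y₀) = (1/2)|Σ^{-1/2}(y₀ - 𝒢(a))|²` and
`Z(y₀) = ∫ exp(-Φ(a; y₀)) dμ0(a)`. -/
theorem bayes_formula_condDistrib
    {X : Type*} [MeasurableSpace X] [TopologicalSpace X] [PolishSpace X] [BorelSpace X]
    [Nonempty X]
    (μ0 : Measure X) [IsProbabilityMeasure μ0]
    {Ω : Type*} [MeasurableSpace Ω] (P : Measure Ω) [IsProbabilityMeasure P]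
    (m : ℕ) (hm : 1 ≤ m)
    (𝒢 : X → EuclideanSpace ℝ (Fin m)) (h𝒢 : Continuous 𝒢)
    (S Q : EuclideanSpace ℝ (Fin m) →L[ℝ] EuclideanSpace ℝ (Fin m))
    -- `S` (playing the role of Σ) is symmetric positive definite
    (hSsymm : ∀ v w : EuclideanSpace ℝ (Fin m), ⟪S v, w⟫ = ⟪v, S w⟫)
    (hSpos : ∀ v : EuclideanSpace ℝ (Fin m), v ≠ 0 → 0 < ⟪S v, v⟫)
    -- `Q` is the inverse of the positive-definite square root of `S`
    (hQsymm : ∀ v w : EuclideanSpace ℝ (Fin m), ⟪Q v, w⟫ = ⟪v, Q w⟫)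
    (hQpos : ∀ v : EuclideanSpace ℝ (Fin m), v ≠ 0 → 0 < ⟪Q v, v⟫)
    (hQS : Q ∘L S ∘L Q = ContinuousLinearMap.id ℝ (EuclideanSpace ℝ (Fin m)))
    -- the random element `x` with law `μ0`
    (x : Ω → X) (hx : Measurable x) (hxlaw : P.map x = μ0)
    -- the Gaussian noise `σ ~ N(0, Σ)`, independent of `x`
    (σ : Ω → EuclideanSpace ℝ (Fin m)) (hσ : Measurable σ)
    (hσlaw : P.map σ = volume.withDensity (fun u => ENNReal.ofReal
      (((2 * π) ^ m * LinearMap.det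
          (S : EuclideanSpace ℝ (Fin m) →ₗ[ℝ] EuclideanSpace ℝ (Fin m))) ^ (-(1:ℝ)/2)
        * Real.exp (-(1/2) * ‖Q u‖^2))))
    (hindep : IndepFun x σ P)
    -- the observation
    (y : Ω → EuclideanSpace ℝ (Fin m)) (hy : y = fun ω => 𝒢 (x ω) + σ ω)
    -- the misfit functional and the normalization constant
    (Φ : X → EuclideanSpace ℝ (Fin m) → ℝ)
    (hΦ : ∀ a z, Φ a z = (1/2) * ‖Q (z - 𝒢 a)‖^2)
    (Z : EuclideanSpace ℝ (Fin m) → ℝ)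
    (hZ : ∀ z, Z z = ∫ a, Real.exp (-Φ a z) ∂μ0) :
    ∀ᵐ y₀ ∂(P.map y),
      condDistrib x y P y₀ ≪ μ0 ∧
      condDistrib x y P y₀
        = μ0.withDensity (fun a => ENNReal.ofReal ((Z y₀)⁻¹ * Real.exp (-Φ a y₀))) :=
  bayes_formula_condDistrib_general μ0 P m 𝒢 h𝒢 S Q x hx hxlaw σ hσ hσlaw hindep y hy Φ hΦ Z hZ
end

section
/- There exists a constant c > 0, depending only on C₀, C₁, |b| and t − s, such that for every absolutely continuous curve γ : [s,t] → ℝ^d one has A^{W,b}_{s,t}(γ) ≥ −c·( 1 + max_{s ≤ τ ≤ t} |W(τ) − W(t)|² ). -/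
open MeasureTheory Set Real RealInnerProductSpace

/-- `γ : [s,t] → ℝ^d` is absolutely continuous with (integrable) derivative `γ'`:
`γ τ = γ s + ∫_s^τ γ' u du` for all `τ ∈ [s,t]`. -/
def IsACWith {d : ℕ} (γ γ' : ℝ → EuclideanSpace ℝ (Fin d)) (s t : ℝ) : Prop :=
  IntervalIntegrable γ' volume s t ∧
    ∀ τ ∈ Set.Icc s t, γ τ = γ s + ∫ u in s..τ, γ' u

/-- The action `A^{W,b}_{s,t}(γ) = ∫_s^t ((1/2)|γ̇ - b|² + ∇F(γ)·γ̇ (W(τ) - W(t)) - (1/2)|b|²) dτ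
- F(γ(s)) (W(t) - W(s))`, expressed via the pair `(γ, γ')`. -/
noncomputable def actionB {d : ℕ} (F : EuclideanSpace ℝ (Fin d) → ℝ) (W : ℝ → ℝ)
    (b : EuclideanSpace ℝ (Fin d)) (γ γ' : ℝ → EuclideanSpace ℝ (Fin d)) (s t : ℝ) : ℝ :=
  (∫ τ in s..t, ((1/2) * ‖γ' τ - b‖^2
      + ⟪gradient F (γ τ), γ' τ⟫ * (W τ - W t) - (1/2) * ‖b‖^2))
    - F (γ s) * (W t - W s)

/-- `max_{s ≤ τ ≤ t} |W(τ) - W(t)|`. -/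
noncomputable def maxW (W : ℝ → ℝ) (s t : ℝ) : ℝ :=
  sSup ((fun τ => |W τ - W t|) '' Set.Icc s t)

/-- `v ∈ ℤ^d`. -/
def IsIntVec {d : ℕ} (v : EuclideanSpace ℝ (Fin d)) : Prop :=
  ∀ i, ∃ k : ℤ, v i = (k : ℝ)

/-!
The integrand of the action is bounded below pointwise in time. Writing
`m = ‖∇F(γ)‖ |W(τ) - W(t)|`, the cross term is at least `-m ‖γ̇‖ ≥ -m (‖γ̇ - b‖ + ‖b‖)`, and
completing the square in `‖γ̇ - b‖` bounds the integrand below by `-(m + ‖b‖)² / 2`, with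
`m ≤ C₁ max |W(τ) - W(t)|`. The boundary term is at least `-C₀ max |W(τ) - W(t)|`.
-/

lemma abs_sub_le_maxW {W : ℝ → ℝ} {s t τ : ℝ} (hW : ContinuousOn W (Icc s t))
    (hτ : τ ∈ Icc s t) : |W τ - W t| ≤ maxW W s t := by
  have hbdd : BddAbove ((fun τ => |W τ - W t|) '' Icc s t) :=
    (isCompact_Icc.image_of_continuousOn ((hW.sub continuousOn_const).abs)).bddAbove
  exact le_csSup hbdd (mem_image_of_mem _ hτ)

lemma neg_half_sq_le_action_integrand {E : Type*} [NormedAddCommGroup E]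
    [InnerProductSpace ℝ E] (g v b : E) (w : ℝ) :
    -(1/2 * (‖g‖ * |w| + ‖b‖)^2) ≤ 1/2 * ‖v - b‖^2 + ⟪g, v⟫ * w - 1/2 * ‖b‖^2 := by
  have hcross : -(‖g‖ * |w| * (‖v - b‖ + ‖b‖)) ≤ ⟪g, v⟫ * w :=
    calc -(‖g‖ * |w| * (‖v - b‖ + ‖b‖))
        ≤ -(‖g‖ * ‖v‖ * |w|) := by
          have := norm_le_norm_sub_add v b
          rw [neg_le_neg_iff, mul_right_comm]
          gcongr
      _ ≤ -|⟪g, v⟫| * |w| := by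
          rw [neg_mul, neg_le_neg_iff]
          gcongr
          exact abs_real_inner_le_norm g v
      _ ≤ ⟪g, v⟫ * w := by
          rw [neg_mul, ← abs_mul]
          exact neg_abs_le _
  nlinarith [sq_nonneg (‖v - b‖ - ‖g‖ * |w|)]

lemma neg_mul_sub_le_intervalIntegral {f : ℝ → ℝ} {s t K : ℝ} (hst : s ≤ t) (hK : 0 ≤ K)
    (hf : ∀ τ ∈ Icc s t, -K ≤ f τ) : -(K * (t - s)) ≤ ∫ τ in s..t, f τ := by
  by_cases hint : IntervalIntegrable f volume s t
  · simpa [mul_comm] using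
      intervalIntegral.integral_mono_on hst intervalIntegrable_const hint hf
  · rw [intervalIntegral.integral_undef hint, neg_nonpos]
    exact mul_nonneg hK (sub_nonneg.2 hst)

lemma half_sq_mul_add_le_mul_one_add_sq (C₀ C₁ B T M : ℝ) :
    1/2 * (C₁ * M + B)^2 * |T| + |C₀| * M
      ≤ (|T| * (C₁^2 + B^2) + |C₀| + 1) * (1 + M^2) := by
  have hsq : 1/2 * (C₁ * M + B)^2 ≤ (C₁^2 + B^2) * (1 + M^2) := by
    nlinarith [sq_nonneg (C₁ * M - B), sq_nonneg C₁, sq_nonneg (B * M)]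
  have hM' : M ≤ 1 + M^2 := by nlinarith [sq_nonneg (M - 1)]
  nlinarith [mul_le_mul_of_nonneg_left hsq (abs_nonneg T),
    mul_le_mul_of_nonneg_left hM' (abs_nonneg C₀)]

/-- There is a constant `c > 0` depending only on `C₀, C₁, |b|` and `t - s`
such that every absolutely continuous curve `γ : [s,t] → ℝ^d` satisfies
`A^{W,b}_{s,t}(γ) ≥ -c (1 + max_{s ≤ τ ≤ t} |W(τ) - W(t)|²)`. -/
theorem action_lower_bound_periodic (C₀ C₁ B T : ℝ) :
    ∃ c : ℝ, 0 < c ∧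
      ∀ (d : ℕ), 1 ≤ d →
      ∀ b : EuclideanSpace ℝ (Fin d), ‖b‖ = B →
      ∀ s t : ℝ, s < t → t - s = T →
      ∀ F : EuclideanSpace ℝ (Fin d) → ℝ, ContDiff ℝ 1 F →
        (∀ x, |F x| ≤ C₀) → (∀ x, ‖gradient F x‖ ≤ C₁) →
      ∀ W : ℝ → ℝ, Continuous W →
      ∀ γ γ' : ℝ → EuclideanSpace ℝ (Fin d), IsACWith γ γ' s t →
        -c * (1 + (maxW W s t)^2) ≤ actionB F W b γ γ' s t := by
  refine ⟨|T| * (C₁^2 + B^2) + |C₀| + 1, by positivity, ?_⟩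
  intro d _ b hB s t hst hT F _ hF hgradF W hW γ γ' _
  set M := maxW W s t
  have hWM : ∀ τ ∈ Icc s t, |W τ - W t| ≤ M := fun _ hτ =>
    abs_sub_le_maxW hW.continuousOn hτ
  have hC₁ : 0 ≤ C₁ := (norm_nonneg _).trans (hgradF 0)
  have hintegral : -(1/2 * (C₁ * M + B)^2 * |T|) ≤ ∫ τ in s..t, (1/2 * ‖γ' τ - b‖^2
      + ⟪gradient F (γ τ), γ' τ⟫ * (W τ - W t) - 1/2 * ‖b‖^2) := by
    rw [← hT, abs_of_pos (sub_pos.2 hst)]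
    refine neg_mul_sub_le_intervalIntegral (K := 1/2 * (C₁ * M + B)^2) hst.le
      (by positivity) fun τ hτ =>
      (neg_half_sq_le_action_integrand (gradient F (γ τ)) (γ' τ) b (W τ - W t)).trans' ?_
    rw [neg_le_neg_iff, ← hB]
    gcongr
    exacts [hgradF _, hWM τ hτ]
  have hboundary : |F (γ s) * (W t - W s)| ≤ |C₀| * M := by
    rw [abs_mul, abs_sub_comm]
    exact mul_le_mul ((hF _).trans (le_abs_self _)) (hWM s ⟨le_rfl, hst.le⟩)
      (abs_nonneg _) (abs_nonneg _)
  rw [actionB]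
  linarith [le_abs_self (F (γ s) * (W t - W s)),
    half_sq_mul_add_le_mul_one_add_sq C₀ C₁ B T M]
end
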